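/- arXiv:1110.2225 — 3 statements merged into one kernel-verified Lean document; each statement's English description precedes it below -/
import Mathlib

section
/- The formal power series G(x) = Σ_{n≥0} av_{t51}(n) x^n (with integer or rational coefficients) satisfies the functional equation x·G(x)^2 − G(x) + x = 0. -/
inductive TTree : Type
  | L : TTree
  | N : TTree → TTree → TTree → TTree

namespace TTree

/-- `occursAtRoot t T` : the pattern `t` occurs at the root of `T`. -/
def occursAtRoot : TTree → TTree → Prop
  | .L, _ => True
  | .N _ _ _, .L => False
  | .N p q r, .N a b c => occursAtRoot p a ∧ occursAtRoot q b ∧ occursAtRoot r c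

/-- `contains t T` : the pattern `t` occurs at some vertex of `T`. -/
def contains (t : TTree) : TTree → Prop
  | .L => occursAtRoot t .L
  | .N a b c => occursAtRoot t (.N a b c) ∨ contains t a ∨ contains t b ∨ contains t c

/-- `T.avoids t` : the tree `T` avoids the pattern `t`. -/
def avoids (T t : TTree) : Prop := ¬ contains t T

/-- the number of leaves of a ternary tree -/
def leaves : TTree → ℕ
  | .L => 1
  | .N a b c => leaves a + leaves b + leaves c

end TTree

/-- `av t n` : the number of `n`-leaf ternary trees avoiding the pattern `t` -/
noncomputable def av (t : TTree) (n : ℕ) : ℕ :=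
  Set.ncard {T : TTree | T.leaves = n ∧ T.avoids t}

/-- the 5-leaf pattern `t51 = N(N(L,L,L),L,L)` -/
def t51 : TTree := .N (.N .L .L .L) .L .L


/-!
A ternary tree avoids `t51` exactly when it is a leaf or its root has a leaf as left child and
`t51`-avoiding center and right subtrees. Counting leaves, `G = x + x G²`.
-/

namespace TTree

lemma one_le_leaves (T : TTree) : 1 ≤ T.leaves := by
  induction T with
  | L => simp [leaves]
  | N a b c _ _ _ => simp only [leaves]; omega

lemma L_avoids_t51 : L.avoids t51 := by
  simp [avoids, contains, occursAtRoot, t51]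

lemma N_avoids_t51_iff (a b c : TTree) :
    (N a b c).avoids t51 ↔ a = L ∧ b.avoids t51 ∧ c.avoids t51 := by
  cases a <;> simp [avoids, contains, occursAtRoot, t51]

end TTree

open TTree Finset

open scoped Classical in
noncomputable def t51Avoiders : ℕ → Finset TTree
  | 0 => ∅
  | 1 => {L}
  | n + 2 => (antidiagonal (n + 1)).attach.biUnion fun p =>
      (t51Avoiders p.1.1 ×ˢ t51Avoiders p.1.2).image fun bc => N L bc.1 bc.2
  decreasing_by
    all_goals have := HasAntidiagonal.mem_antidiagonal.mp p.2; omega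

lemma mem_t51Avoiders {n : ℕ} {T : TTree} :
    T ∈ t51Avoiders n ↔ T.leaves = n ∧ T.avoids t51 := by
  induction n using Nat.strong_induction_on generalizing T with
  | _ n ih =>
  match n, T with
  | 0, T => simp [t51Avoiders, Nat.one_le_iff_ne_zero.mp T.one_le_leaves]
  | 1, L => simpa [t51Avoiders, leaves] using L_avoids_t51
  | 1, N a b c =>
    have := a.one_le_leaves; have := b.one_le_leaves; have := c.one_le_leaves
    simp [t51Avoiders, leaves]
    omega
  | m + 2, L => simp [t51Avoiders, leaves]
  | m + 2, N a b c =>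
    simp only [t51Avoiders, Finset.mem_biUnion, Finset.mem_attach, true_and, Finset.mem_image,
      Finset.mem_product, Subtype.exists, HasAntidiagonal.mem_antidiagonal, Prod.exists, N.injEq,
      leaves, N_avoids_t51_iff]
    constructor
    · rintro ⟨i, j, hij, b, c, ⟨hb, hc⟩, rfl, rfl, rfl⟩
      obtain ⟨rfl, hb'⟩ := (ih i (by omega)).mp hb
      obtain ⟨rfl, hc'⟩ := (ih j (by omega)).mp hc
      exact ⟨by simp only [leaves]; omega, rfl, hb', hc'⟩
    · rintro ⟨hl, rfl, hb, hc⟩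
      have := b.one_le_leaves; have := c.one_le_leaves
      simp only [leaves] at hl
      exact ⟨b.leaves, c.leaves, by omega, b, c,
        ⟨(ih _ (by omega)).mpr ⟨rfl, hb⟩, (ih _ (by omega)).mpr ⟨rfl, hc⟩⟩, rfl, rfl, rfl⟩

lemma av_t51_eq_card (n : ℕ) : av t51 n = (t51Avoiders n).card := by
  rw [av, ← Set.ncard_coe_finset]
  congr
  ext T
  exact mem_t51Avoiders.symm

lemma av_t51_zero : av t51 0 = 0 := by
  simp [av_t51_eq_card, t51Avoiders]

lemma av_t51_one : av t51 1 = 1 := by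
  simp [av_t51_eq_card, t51Avoiders]

lemma av_t51_add_two (n : ℕ) :
    av t51 (n + 2) = ∑ p ∈ antidiagonal (n + 1), av t51 p.1 * av t51 p.2 := by
  classical
  simp only [av_t51_eq_card]
  rw [t51Avoiders, Finset.card_biUnion, ← Finset.sum_attach (antidiagonal (n + 1))]
  · refine Finset.sum_congr rfl fun p _ => ?_
    rw [Finset.card_image_of_injective _ fun _ _ h => by simpa [Prod.ext_iff] using h,
      Finset.card_product]
  · -- the leaf count of the center subtree recovers `p`
    intro p _ q _ hpq
    simp only [Finset.disjoint_left, Finset.mem_image, Finset.mem_product, Prod.exists]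
    rintro _ ⟨b, c, ⟨hb, hc⟩, rfl⟩ ⟨b', c', ⟨hb', hc'⟩, h⟩
    simp only [N.injEq, true_and] at h
    obtain ⟨rfl, rfl⟩ := h
    have := HasAntidiagonal.mem_antidiagonal.mp p.2
    have := HasAntidiagonal.mem_antidiagonal.mp q.2
    rw [mem_t51Avoiders] at hb hb'
    exact hpq (Subtype.ext (Prod.ext (by omega) (by omega)))

namespace PowerSeries

lemma X_mul_sq_sub_add_X_eq_zero {R : Type*} [CommRing R] {f : PowerSeries R}
    (h0 : coeff 0 f = 0) (h1 : coeff 1 f = 1) (h : ∀ n, coeff (n + 2) f = coeff (n + 1) (f ^ 2)) :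
    X * f ^ 2 - f + X = 0 := by
  have hf0 : constantCoeff f = 0 := by rwa [← coeff_zero_eq_constantCoeff_apply]
  ext (_ | _ | n)
  · simp [hf0]
  · simp [coeff_succ_X_mul, h1, hf0]
  · simp [coeff_succ_X_mul, coeff_X, h]

end PowerSeries

open PowerSeries in
/-- The generating function `G(x) = Σ av_{t51}(n) xⁿ` satisfies
`x·G(x)² − G(x) + x = 0`. -/
theorem av_t51_gf :
    let G : PowerSeries ℚ := PowerSeries.mk fun n => (av t51 n : ℚ)
    X * G ^ 2 - G + X = 0 := by
  intro G
  refine X_mul_sq_sub_add_X_eq_zero ?_ ?_ fun n => ?_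
  · simp [G, av_t51_zero]
  · simp [G, av_t51_one]
  · simp only [G, coeff_mk, sq, coeff_mul, av_t51_add_two, Nat.cast_sum, Nat.cast_mul]
end

section
/- The formal power series G(x) = Σ_{n≥0} av_{t71}(n) x^n (with integer or rational coefficients) satisfies the functional equation 2x·G(x)^2 − x^2·G(x) − G(x) + x = 0. -/
/-- the 7-leaf pattern `t71 = N(N(L,L,L),N(L,L,L),L)` -/
def t71 : TTree := .N (.N .L .L .L) (.N .L .L .L) .L

open PowerSeries

section CountingSeries

variable {α β : Type*}

-- `ncard` is `0` on infinite sets, hence the finite-fibre hypotheses below.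
noncomputable def countingSeries (w : α → ℕ) (s : Set α) : PowerSeries ℚ :=
  PowerSeries.mk fun n => ((s ∩ w ⁻¹' {n}).ncard : ℚ)

theorem coeff_countingSeries (w : α → ℕ) (s : Set α) (n : ℕ) :
    coeff n (countingSeries w s) = ((s ∩ w ⁻¹' {n}).ncard : ℚ) :=
  coeff_mk _ _

theorem countingSeries_singleton (w : α → ℕ) (a : α) : countingSeries w {a} = X ^ w a := by
  ext n
  rw [coeff_countingSeries, coeff_X_pow]
  by_cases h : n = w a
  · rw [if_pos h, Set.inter_eq_left.mpr (by simp [h]), Set.ncard_singleton, Nat.cast_one]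
  · rw [if_neg h, Set.singleton_inter_eq_empty.mpr (by simpa [eq_comm] using h),
      Set.ncard_empty, Nat.cast_zero]

theorem countingSeries_union {w : α → ℕ} (hw : ∀ n, (w ⁻¹' {n}).Finite) {s t : Set α}
    (hst : Disjoint s t) : countingSeries w (s ∪ t) = countingSeries w s + countingSeries w t := by
  ext n
  rw [map_add, coeff_countingSeries, coeff_countingSeries, coeff_countingSeries,
    Set.union_inter_distrib_right, Set.ncard_union_eq (hst.mono Set.inter_subset_left
      Set.inter_subset_left) ((hw n).inter_of_right s) ((hw n).inter_of_right t), Nat.cast_add]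

theorem countingSeries_sdiff {w : α → ℕ} (hw : ∀ n, (w ⁻¹' {n}).Finite) {s t : Set α}
    (hts : t ⊆ s) : countingSeries w (s \ t) = countingSeries w s - countingSeries w t := by
  ext n
  rw [map_sub, coeff_countingSeries, coeff_countingSeries, coeff_countingSeries,
    eq_sub_iff_add_eq, Set.inter_sdiff_distrib_right, ← Nat.cast_add,
    Set.ncard_sdiff_add_ncard_of_subset (Set.inter_subset_inter_left _ hts)
      ((hw n).inter_of_right s)]

theorem countingSeries_image {w : α → ℕ} {v : β → ℕ} {f : α → β} (hf : Function.Injective f)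
    (hvf : ∀ a, v (f a) = w a) (s : Set α) : countingSeries v (f '' s) = countingSeries w s := by
  ext n
  have hfiber : f '' s ∩ v ⁻¹' {n} = f '' (s ∩ w ⁻¹' {n}) := by
    ext b
    constructor
    · rintro ⟨⟨a, ha, rfl⟩, hn⟩
      exact ⟨a, ⟨ha, by simpa [hvf] using hn⟩, rfl⟩
    · rintro ⟨a, ⟨ha, hn⟩, rfl⟩
      exact ⟨⟨a, ha, rfl⟩, by simpa [hvf] using hn⟩
  rw [coeff_countingSeries, coeff_countingSeries, hfiber, Set.ncard_image_of_injective _ hf]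

section Prod

open Finset

variable {w₁ : α → ℕ} {w₂ : β → ℕ}

theorem prod_inter_preimage_add_eq_biUnion (s : Set α) (t : Set β) (n : ℕ) :
    s ×ˢ t ∩ (fun p => w₁ p.1 + w₂ p.2) ⁻¹' {n} =
      ⋃ q ∈ (antidiagonal n : Set (ℕ × ℕ)), (s ∩ w₁ ⁻¹' {q.1}) ×ˢ (t ∩ w₂ ⁻¹' {q.2}) := by
  ext ⟨a, b⟩
  simp only [Set.mem_inter_iff, Set.mem_prod, Set.mem_preimage, Set.mem_singleton_iff,
    Set.mem_iUnion, mem_coe, HasAntidiagonal.mem_antidiagonal, exists_prop, Prod.exists]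
  constructor
  · rintro ⟨⟨ha, hb⟩, hn⟩
    exact ⟨_, _, hn, ⟨ha, rfl⟩, hb, rfl⟩
  · rintro ⟨i, j, hij, ⟨ha, rfl⟩, hb, rfl⟩
    exact ⟨⟨ha, hb⟩, hij⟩

theorem pairwiseDisjoint_antidiagonal_prod_fibers (s : Set α) (t : Set β) (n : ℕ) :
    (antidiagonal n : Set (ℕ × ℕ)).PairwiseDisjoint
      fun q => (s ∩ w₁ ⁻¹' {q.1}) ×ˢ (t ∩ w₂ ⁻¹' {q.2}) := by
  rintro ⟨i, j⟩ - ⟨i', j'⟩ - hne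
  refine Set.disjoint_left.mpr ?_
  rintro ⟨a, b⟩ ⟨⟨-, rfl⟩, -, rfl⟩ ⟨⟨-, hi⟩, -, hj⟩
  exact hne (Prod.ext hi hj)

theorem finite_preimage_add (hw₁ : ∀ n, (w₁ ⁻¹' {n}).Finite) (hw₂ : ∀ n, (w₂ ⁻¹' {n}).Finite)
    (n : ℕ) : ((fun p : α × β => w₁ p.1 + w₂ p.2) ⁻¹' {n}).Finite := by
  have h := prod_inter_preimage_add_eq_biUnion (w₁ := w₁) (w₂ := w₂) Set.univ Set.univ n
  rw [Set.univ_prod_univ, Set.univ_inter] at h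
  rw [h]
  exact (finite_toSet _).biUnion fun q _ =>
    ((hw₁ q.1).inter_of_right _).prod ((hw₂ q.2).inter_of_right _)

theorem countingSeries_prod (hw₁ : ∀ n, (w₁ ⁻¹' {n}).Finite) (hw₂ : ∀ n, (w₂ ⁻¹' {n}).Finite)
    (s : Set α) (t : Set β) :
    countingSeries (fun p => w₁ p.1 + w₂ p.2) (s ×ˢ t) =
      countingSeries w₁ s * countingSeries w₂ t := by
  ext n
  rw [coeff_mul, coeff_countingSeries, prod_inter_preimage_add_eq_biUnion,
    (finite_toSet _).ncard_biUnion (fun q _ => ((hw₁ q.1).inter_of_right _).prod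
      ((hw₂ q.2).inter_of_right _)) (pairwiseDisjoint_antidiagonal_prod_fibers s t n),
    finsum_mem_coe_finset, Nat.cast_sum]
  refine sum_congr rfl fun q _ => ?_
  rw [Set.ncard_prod, Nat.cast_mul, coeff_countingSeries, coeff_countingSeries]

end Prod

end CountingSeries

namespace TTree

def node (p : TTree × TTree × TTree) : TTree := N p.1 p.2.1 p.2.2

theorem node_injective : Function.Injective node := by
  rintro ⟨a, b, c⟩ ⟨a', b', c'⟩ h
  simp_all [node]

theorem leaves_pos : ∀ T : TTree, 0 < T.leaves
  | L => Nat.one_pos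
  | N a _ _ => by have := a.leaves_pos; simp only [leaves]; omega

theorem finite_setOf_leaves_le (n : ℕ) : {T : TTree | T.leaves ≤ n}.Finite := by
  induction n with
  | zero => simp [(leaves_pos _).ne']
  | succ n ih =>
    refine ((ih.prod (ih.prod ih)).image node).insert L |>.subset ?_
    rintro (_ | ⟨a, b, c⟩) h
    · exact Set.mem_insert _ _
    · have := a.leaves_pos; have := b.leaves_pos; have := c.leaves_pos
      simp only [Set.mem_ofPred_eq, leaves] at h
      exact Or.inr ⟨(a, b, c), ⟨by simp; omega, by simp; omega, by simp; omega⟩, rfl⟩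

theorem finite_leaves_preimage (n : ℕ) : (leaves ⁻¹' {n}).Finite :=
  (finite_setOf_leaves_le n).subset fun T (h : T.leaves = n) => h.le

theorem avoids_N_iff {a b c t : TTree} :
    (N a b c).avoids t ↔ ¬ occursAtRoot t (N a b c) ∧ a.avoids t ∧ b.avoids t ∧ c.avoids t := by
  simp only [avoids, contains]
  tauto

end TTree

open TTree

theorem occursAtRoot_t71_iff {a b c : TTree} : occursAtRoot t71 (N a b c) ↔ a ≠ L ∧ b ≠ L := by
  cases a <;> cases b <;> simp [t71, occursAtRoot]

theorem L_avoids_t71 : L.avoids t71 := by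
  simp [avoids, contains, t71, occursAtRoot]

theorem setOf_avoids_t71 :
    let S := {T : TTree | T.avoids t71}
    S = {L} ∪ node '' (S ×ˢ S ×ˢ S \ (S \ {L}) ×ˢ (S \ {L}) ×ˢ S) := by
  intro S
  ext (_ | ⟨a, b, c⟩)
  · simpa [S] using L_avoids_t71
  · change node (a, b, c) ∈ S ↔ node (a, b, c) ∈ ({L} : Set TTree) ∨ node (a, b, c) ∈ node '' _
    rw [node_injective.mem_set_image]
    simp only [S, node, Set.mem_ofPred_eq, avoids_N_iff, occursAtRoot_t71_iff,
      Set.mem_singleton_iff, reduceCtorEq, false_or, Set.mem_sdiff, Set.mem_prod]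
    tauto

theorem countingSeries_leaves_setOf_avoids (t : TTree) :
    countingSeries leaves {T | T.avoids t} = PowerSeries.mk fun n => (av t n : ℚ) := by
  ext n
  rw [coeff_countingSeries, coeff_mk, av, Set.inter_comm]
  rfl

theorem countingSeries_leaves_setOf_avoids_t71 :
    let G := countingSeries leaves {T | T.avoids t71}
    G = X + (G ^ 3 - (G - X) ^ 2 * G) := by
  intro G
  set S := {T : TTree | T.avoids t71}
  have hfin₁ : ∀ n, (leaves ⁻¹' {n}).Finite := finite_leaves_preimage
  have hfin₂ := finite_preimage_add hfin₁ hfin₁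
  have hfin₃ := finite_preimage_add hfin₁ hfin₂
  have hL : countingSeries leaves {L} = X := by
    rw [countingSeries_singleton, leaves, pow_one]
  have hS_diff_L : countingSeries leaves (S \ {L}) = G - X := by
    rw [countingSeries_sdiff hfin₁ (Set.singleton_subset_iff.mpr L_avoids_t71), hL]
  have hdisj : Disjoint {L} (node '' (S ×ˢ S ×ˢ S \ (S \ {L}) ×ˢ (S \ {L}) ×ˢ S)) := by
    rw [Set.disjoint_singleton_left]
    rintro ⟨_, -, ⟨⟩⟩
  have hsub : (S \ {L}) ×ˢ (S \ {L}) ×ˢ S ⊆ S ×ˢ S ×ˢ S :=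
    Set.prod_mono Set.sdiff_subset (Set.prod_mono Set.sdiff_subset subset_rfl)
  calc G = countingSeries leaves ({L} ∪ node '' (S ×ˢ S ×ˢ S \ (S \ {L}) ×ˢ (S \ {L}) ×ˢ S)) :=
        congrArg (countingSeries leaves) setOf_avoids_t71
    _ = X + (G ^ 3 - (G - X) ^ 2 * G) := by
      rw [countingSeries_union hfin₁ hdisj, hL,
        countingSeries_image node_injective (fun _ => add_assoc _ _ _),
        countingSeries_sdiff hfin₃ hsub, countingSeries_prod hfin₁ hfin₂,
        countingSeries_prod hfin₁ hfin₂, countingSeries_prod hfin₁ hfin₁,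
        countingSeries_prod hfin₁ hfin₁, hS_diff_L]
      ring

open PowerSeries in
/-- The generating function `G(x) = Σ av_{t71}(n) xⁿ` satisfies
`2x·G(x)² − x²·G(x) − G(x) + x = 0`. -/
theorem av_t71_gf :
    let G : PowerSeries ℚ := PowerSeries.mk fun n => (av t71 n : ℚ)
    2 * X * G ^ 2 - X ^ 2 * G - G + X = 0 := by
  intro G
  have hG := countingSeries_leaves_setOf_avoids_t71
  rw [countingSeries_leaves_setOf_avoids] at hG
  linear_combination -hG
end

section
/- For all n ≥ 0, av_{t73}(n) = av_{t77}(n), where t73 = N(N(N(L,L,L),L,L),L,L) and t77 = N(L,N(L,N(L,L,L),L),L). -/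
/-- the 7-leaf pattern `t73 = N(N(N(L,L,L),L,L),L,L)` -/
def t73 : TTree := .N (.N (.N .L .L .L) .L .L) .L .L

/-- the 7-leaf pattern `t77 = N(L,N(L,N(L,L,L),L),L)` -/
def t77 : TTree := .N .L (.N .L (.N .L .L .L) .L) .L

namespace TTree

def swap : TTree → TTree
  | .L => .L
  | .N a b c => .N (swap b) (swap a) (swap c)

theorem swap_involutive : Function.Involutive swap
  | .L => rfl
  | .N a b c => by rw [swap, swap, swap_involutive a, swap_involutive b, swap_involutive c]

theorem leaves_swap : ∀ T : TTree, (swap T).leaves = T.leaves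
  | .L => rfl
  | .N a b c => by
    rw [swap, leaves, leaves, leaves_swap a, leaves_swap b, leaves_swap c, Nat.add_comm a.leaves]

theorem occursAtRoot_swap : ∀ t T : TTree, occursAtRoot (swap t) (swap T) ↔ occursAtRoot t T
  | .L, _ => Iff.rfl
  | .N _ _ _, .L => Iff.rfl
  | .N p q r, .N a b c => by
    simp only [swap, occursAtRoot, occursAtRoot_swap p a, occursAtRoot_swap q b,
      occursAtRoot_swap r c, and_left_comm]

theorem contains_swap (t : TTree) : ∀ T : TTree, contains (swap t) (swap T) ↔ contains t T
  | .L => occursAtRoot_swap t .L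
  | .N a b c => by
    change occursAtRoot (swap t) (swap (.N a b c)) ∨ contains (swap t) (swap b) ∨
        contains (swap t) (swap a) ∨ contains (swap t) (swap c) ↔ _
    rw [occursAtRoot_swap, contains_swap t a, contains_swap t b, contains_swap t c, contains,
      or_left_comm (a := contains t b)]

theorem avoids_swap_iff (T t : TTree) : (swap T).avoids (swap t) ↔ T.avoids t :=
  not_congr (contains_swap t T)

end TTree

theorem av_swap (t : TTree) (n : ℕ) : av (TTree.swap t) n = av t n := by
  have hset : {T : TTree | T.leaves = n ∧ T.avoids (TTree.swap t)} =
      TTree.swap '' {T : TTree | T.leaves = n ∧ T.avoids t} := by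
    rw [TTree.swap_involutive.image_eq_preimage_symm]
    ext T
    rw [Set.mem_preimage, Set.mem_ofPred_eq, Set.mem_ofPred_eq, TTree.leaves_swap,
      ← TTree.avoids_swap_iff, TTree.swap_involutive]
  rw [av, hset, Set.ncard_image_of_injective _ TTree.swap_involutive.injective, av]

/-- The patterns `t73` and `t77` are Wilf equivalent. -/
theorem av_t73_eq_av_t77 (n : ℕ) : av t73 n = av t77 n :=
  (av_swap t73 n).symm
end
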